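/- arXiv:0903.1244 — 4 statements merged into one kernel-verified Lean document; each statement's English description precedes it below -/
import Mathlib

section
/- Let T = (t_{i−j})_{i,j=0}^{n−1} be an invertible Toeplitz matrix over a field K, and let T̃(x) = Σ_{i=0}^{2n−1} t̃_i x^i with t̃_i = t_i for i < n and t̃_i = t_{i−2n} for i ≥ n. Then the only syzygy (p,q,r) ∈ K[x]^3 with deg p, deg q, deg r ≤ n−1 satisfying T̃(x)·p(x) + x^n·q(x) + (x^{2n}−1)·r(x) = 0 is (0,0,0). -/
open Polynomial Finset

/-- The polynomial `T̃(x) = Σ_{i=0}^{2n-1} t̃_i x^i`, with `t̃_i = t_i` for `i < n`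
and `t̃_i = t_{i-2n}` for `i ≥ n`, associated to the Toeplitz matrix with entries
`t_{i-j}`. -/
noncomputable def Ttilde {K : Type*} [Field K] (n : ℕ) (t : ℤ → K) : Polynomial K :=
  ∑ i ∈ Finset.range (2 * n),
    C (if i < n then t i else t ((i : ℤ) - 2 * n)) * X ^ i

open scoped Matrix

/-!
Fold the coefficients of `T̃ p` modulo `x^{2n} - 1`: for `k < n`, the sum of the coefficients of
`x^k` and `x^{k+2n}` of `T̃ p` is the `k`-th entry of `T` applied to the coefficient vector of `p`,
while the same sum vanishes for `x^n q` and `(x^{2n} - 1) r` by the degree bounds. A syzygy thus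
gives `T p = 0`, so `p = 0` since `T` is invertible. Then `r = x^n (q + x^n r)` is divisible by
`x^n`, hence zero, and finally `x^n q = 0`.
-/

section

variable {K : Type*} [Field K]

theorem coeff_Ttilde (n : ℕ) (t : ℤ → K) (i : ℕ) :
    (Ttilde n t).coeff i =
      if i < n then t i else if i < 2 * n then t ((i : ℤ) - 2 * n) else 0 := by
  simp only [Ttilde, finsetSum_coeff, coeff_C_mul, coeff_X_pow, mul_ite, mul_one, mul_zero,
    Finset.sum_ite_eq, Finset.mem_range]
  split_ifs <;> first | rfl | omega

theorem coeff_Ttilde_mul_X_pow_add_coeff_add {n j k : ℕ} (t : ℤ → K) (hj : j < n)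
    (hk : k < n) :
    (Ttilde n t * X ^ j).coeff k + (Ttilde n t * X ^ j).coeff (k + 2 * n) =
      t ((k : ℤ) - j) := by
  simp only [coeff_mul_X_pow', coeff_Ttilde]
  rcases le_or_gt j k with hjk | hjk
  · simp only [if_pos hjk, if_pos (by omega : j ≤ k + 2 * n), if_pos (by omega : k - j < n),
      if_neg (by omega : ¬ k + 2 * n - j < n), if_neg (by omega : ¬ k + 2 * n - j < 2 * n),
      add_zero, Nat.cast_sub hjk]
  · simp only [if_neg (by omega : ¬ j ≤ k), if_pos (by omega : j ≤ k + 2 * n),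
      if_neg (by omega : ¬ k + 2 * n - j < n), if_pos (by omega : k + 2 * n - j < 2 * n),
      zero_add, Nat.cast_sub (by omega : j ≤ k + 2 * n)]
    push_cast
    congr 1
    ring

theorem coeff_Ttilde_mul_add_coeff_add_eq_mulVec {n : ℕ} (t : ℤ → K) {p : K[X]}
    (hp : p.degree < n) (i : Fin n) :
    (Ttilde n t * p).coeff i + (Ttilde n t * p).coeff (i + 2 * n) =
      ((Matrix.of fun i j : Fin n => t ((i : ℤ) - (j : ℤ))) *ᵥ fun j => p.coeff j) i := by
  have hp' : p.natDegree < n := by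
    rcases eq_or_ne p 0 with rfl | hp0
    · exact i.pos
    · exact (natDegree_lt_iff_degree_lt hp0).2 hp
  conv_lhs => rw [as_sum_range_C_mul_X_pow' p hp']
  simp only [Finset.mul_sum, mul_left_comm _ (C _), finsetSum_coeff, coeff_C_mul,
    ← Finset.sum_add_distrib, ← mul_add]
  rw [← Fin.sum_univ_eq_sum_range]
  refine Finset.sum_congr rfl fun j _ => ?_
  rw [coeff_Ttilde_mul_X_pow_add_coeff_add t j.isLt i.isLt, mul_comm]
  rfl

end

theorem coeff_X_pow_mul_add_coeff_add {R : Type*} [Semiring R] {n k : ℕ} {q : R[X]}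
    (hk : k < n) (hq : q.degree < n) :
    (X ^ n * q).coeff k + (X ^ n * q).coeff (k + 2 * n) = 0 := by
  rw [coeff_X_pow_mul', coeff_X_pow_mul', if_neg (by omega), if_pos (by omega),
    coeff_eq_zero_of_degree_lt (hq.trans_le (by norm_cast; omega)), add_zero]

theorem coeff_X_pow_sub_one_mul_add_coeff_add {R : Type*} [Ring R] {N k : ℕ} {r : R[X]}
    (hk : k < N) (hr : r.degree < N) :
    ((X ^ N - 1) * r).coeff k + ((X ^ N - 1) * r).coeff (k + N) = 0 := by
  simp only [sub_mul, one_mul, coeff_sub, coeff_X_pow_mul', if_neg (by omega : ¬ N ≤ k),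
    if_pos (by omega : N ≤ k + N), Nat.add_sub_cancel,
    coeff_eq_zero_of_degree_lt (hr.trans_le (by norm_cast; omega) : r.degree < ↑(k + N))]
  abel

theorem stmt_2_general {K : Type*} [Field K] (n : ℕ) (t : ℤ → K)
    (T : Matrix (Fin n) (Fin n) K) (hT : T = Matrix.of fun i j : Fin n => t ((i : ℤ) - (j : ℤ)))
    (hTinv : IsUnit T)
    (p q r : Polynomial K)
    (hp : p.degree < n) (hq : q.degree < n) (hr : r.degree < n)
    (hsyz : Ttilde n t * p + X ^ n * q + (X ^ (2 * n) - 1) * r = 0) :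
    p = 0 ∧ q = 0 ∧ r = 0 := by
  have hTp : T *ᵥ (fun j => p.coeff j) = 0 := by
    funext i
    have hfold := congrArg (fun f => f.coeff i + f.coeff (i + 2 * n)) hsyz
    simp only [coeff_add, coeff_zero, add_zero] at hfold
    rw [hT, ← coeff_Ttilde_mul_add_coeff_add_eq_mulVec t hp i, Pi.zero_apply, ← hfold]
    have hr2 : r.degree < ↑(2 * n) := hr.trans_le (by norm_cast; omega)
    linear_combination -coeff_X_pow_mul_add_coeff_add i.isLt hq -
      coeff_X_pow_sub_one_mul_add_coeff_add (k := i) (by omega) hr2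
  have hp0 : p = 0 := by
    have hcoeff := Matrix.eq_zero_of_mulVec_eq_zero
      ((Matrix.isUnit_iff_isUnit_det T).1 hTinv).ne_zero hTp
    ext j
    rcases lt_or_ge j n with hj | hj
    · exact congrFun hcoeff ⟨j, hj⟩
    · exact coeff_eq_zero_of_degree_lt (hp.trans_le (by exact_mod_cast hj))
  subst hp0
  have hr0 : r = 0 := by
    refine eq_zero_of_dvd_of_degree_lt ⟨q + X ^ n * r, ?_⟩ (by rwa [degree_X_pow])
    linear_combination -hsyz
  subst hr0
  rw [mul_zero, zero_add, mul_zero, add_zero] at hsyz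
  exact ⟨rfl, (mul_eq_zero.1 hsyz).resolve_left (pow_ne_zero n X_ne_zero), rfl⟩

/-- If the Toeplitz matrix `T = (t_{i-j})` is invertible, then the only syzygy
`(p,q,r)` with `deg p, deg q, deg r ≤ n-1` of `(T̃(x), x^n, x^{2n}-1)` is `(0,0,0)`. -/
theorem stmt_2 {K : Type*} [Field K] (n : ℕ) (hn : 0 < n) (t : ℤ → K)
    (T : Matrix (Fin n) (Fin n) K) (hT : T = Matrix.of fun i j : Fin n => t ((i : ℤ) - (j : ℤ)))
    (hTinv : IsUnit T)
    (p q r : Polynomial K)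
    (hp : p.degree < n) (hq : q.degree < n) (hr : r.degree < n)
    (hsyz : Ttilde n t * p + X ^ n * q + (X ^ (2 * n) - 1) * r = 0) :
    p = 0 ∧ q = 0 ∧ r = 0 :=
  stmt_2_general n t T hT hTinv p q r hp hq hr hsyz
end

section
/- Let T be an invertible n×n Toeplitz matrix over a field K with associated polynomial T̃(x) as above. Then the syzygy module L(T̃(x), x^n, x^{2n}−1) admits a basis consisting of two elements both of degree exactly n (an n-basis). -/
open Polynomial Finset

/-- The degree of a vector of polynomials: the maximum of the nat-degrees of its entries. -/
noncomputable def vecDeg {K : Type*} [Field K] (v : Fin 3 → Polynomial K) : ℕ :=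
  max (max (v 0).natDegree (v 1).natDegree) (v 2).natDegree

/-!
Write `g = X ^ n` and `h = X ^ (2 n) - 1`; they are coprime. For a syzygy `p` with all entries
of degree `< n`, reducing `T̃ * p 0 + g * p 1 + h * p 2 = 0` modulo `h` and reading off the
coefficients `0, …, n - 1` gives `T y = 0` for the coefficient vector `y` of `p 0`, so `p 0 = 0`,
and then `p = 0` because `h ∣ p 1`. Thus every nonzero syzygy has degree at least `n`.

Syzygies of degree `≤ n` are the solutions of `3 n + 1` linear equations in `3 (n + 1)` unknowns,
so there are two `K`-independent ones, `P` and `Q`. The minor `P 1 * Q 0 - P 0 * Q 1` is divisible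
by `h` and has degree `≤ 2 n`, so it is `h` times a constant. That constant is nonzero: otherwise
`P` and `Q` are `K[X]`-multiples of one syzygy, which has degree `< n` unless both multipliers are
constants. Finally, two syzygies whose minor is `h` times a unit form a basis, by Cramer's rule.
-/

theorem vecDeg_le_iff {K : Type*} [Field K] {v : Fin 3 → K[X]} {m : ℕ} :
    vecDeg v ≤ m ↔ ∀ i, (v i).natDegree ≤ m := by
  simp [vecDeg, Fin.forall_fin_succ]

theorem natDegree_le_of_mem_degreeLT_succ {K : Type*} [Field K] {n : ℕ} {q : K[X]}
    (hq : q ∈ degreeLT K (n + 1)) : q.natDegree ≤ n := by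
  rwa [degreeLT_succ_eq_degreeLE, mem_degreeLE, ← natDegree_le_iff_degree_le] at hq

theorem exists_eq_smul_of_mul_eq_mul {R ι : Type*} [EuclideanDomain R] [GCDMonoid R]
    {P Q : ι → R} (hP : P ≠ 0) (hPQ : ∀ i j, P i * Q j = P j * Q i) :
    ∃ (a b : R) (F : ι → R), P = a • F ∧ Q = b • F := by
  obtain ⟨i₀, hi₀⟩ := Function.ne_iff.1 hP
  have hd : gcd (P i₀) (Q i₀) ≠ 0 := gcd_ne_zero_of_left hi₀
  set a := P i₀ / gcd (P i₀) (Q i₀)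
  set b := Q i₀ / gcd (P i₀) (Q i₀)
  have hab : IsCoprime a b := isCoprime_div_gcd_div_gcd_of_gcd_ne_zero hd
  have haP : gcd (P i₀) (Q i₀) * a = P i₀ :=
    EuclideanDomain.mul_div_cancel' hd (gcd_dvd_left _ _)
  have hbQ : gcd (P i₀) (Q i₀) * b = Q i₀ :=
    EuclideanDomain.mul_div_cancel' hd (gcd_dvd_right _ _)
  have ha : a ≠ 0 := by rintro h; rw [h, mul_zero] at haP; exact hi₀ haP.symm
  have hcross : ∀ i, a * Q i = P i * b := fun i =>
    mul_left_cancel₀ hd (by linear_combination Q i * haP - P i * hbQ + hPQ i₀ i)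
  choose F hF using fun i => hab.dvd_of_dvd_mul_right ⟨Q i, (hcross i).symm⟩
  refine ⟨a, b, F, funext hF, funext fun i => mul_left_cancel₀ ha ?_⟩
  simp only [Pi.smul_apply, smul_eq_mul]
  linear_combination hcross i + b * hF i

namespace Syzygy

section CommRing

variable {R : Type*} [CommRing R]

def syzygyMap (f g h : R) : (Fin 3 → R) →ₗ[R] R :=
  f • LinearMap.proj 0 + g • LinearMap.proj 1 + h • LinearMap.proj 2

def syzygies (f g h : R) : Submodule R (Fin 3 → R) :=
  LinearMap.ker (syzygyMap f g h)

variable {f g h : R} {p q P Q : Fin 3 → R}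

theorem mem_syzygies : p ∈ syzygies f g h ↔ f * p 0 + g * p 1 + h * p 2 = 0 :=
  Iff.rfl

theorem dvd_cross_of_mem_syzygies (hgh : IsCoprime h g) (hp : p ∈ syzygies f g h)
    (hq : q ∈ syzygies f g h) : h ∣ p 1 * q 0 - p 0 * q 1 := by
  rw [mem_syzygies] at hp hq
  exact hgh.dvd_of_dvd_mul_left ⟨p 0 * q 2 - p 2 * q 0, by linear_combination q 0 * hp - p 0 * hq⟩

variable [IsDomain R]

theorem eq_of_mem_syzygies (hh : h ≠ 0) (hp : p ∈ syzygies f g h) (hq : q ∈ syzygies f g h)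
    (h0 : p 0 = q 0) (h1 : p 1 = q 1) : p = q := by
  rw [mem_syzygies] at hp hq
  have h2 : p 2 = q 2 := mul_left_cancel₀ hh (by linear_combination hp - hq - f * h0 - g * h1)
  ext i
  fin_cases i <;> assumption

theorem mul_eq_mul_of_mem_syzygies (hg : g ≠ 0) (hh : h ≠ 0) (hP : P ∈ syzygies f g h)
    (hQ : Q ∈ syzygies f g h) (hPQ : P 1 * Q 0 = P 0 * Q 1) (i j : Fin 3) :
    P i * Q j = P j * Q i := by
  rw [mem_syzygies] at hP hQ
  have h02 : P 0 * Q 2 = P 2 * Q 0 :=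
    mul_left_cancel₀ hh (by linear_combination P 0 * hQ - Q 0 * hP + g * hPQ)
  have h12 : P 1 * Q 2 = P 2 * Q 1 :=
    mul_left_cancel₀ hg (by linear_combination Q 2 * hP - P 2 * hQ - f * h02)
  fin_cases i <;> fin_cases j <;> simp only [Fin.zero_eta, Fin.mk_one, Fin.reduceFinMk] <;>
    first | rfl | assumption | (symm; assumption)

theorem exists_basis_syzygies {u : R} (hh : h ≠ 0) (hgh : IsCoprime h g)
    (hP : P ∈ syzygies f g h) (hQ : Q ∈ syzygies f g h) (hu : IsUnit u)
    (hPQ : P 1 * Q 0 - P 0 * Q 1 = h * u) :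
    ∃ b : Module.Basis (Fin 2) R (syzygies f g h),
      (b 0 : Fin 3 → R) = P ∧ (b 1 : Fin 3 → R) = Q := by
  obtain ⟨u, rfl⟩ := hu
  have hli : LinearIndependent R ![(⟨P, hP⟩ : syzygies f g h), ⟨Q, hQ⟩] := by
    refine LinearIndependent.pair_iff.2 fun s t hst => ?_
    have h0 := congrFun (congrArg Subtype.val hst) 0
    have h1 := congrFun (congrArg Subtype.val hst) 1
    simp only [Submodule.coe_add, Submodule.coe_smul, Pi.add_apply, Pi.smul_apply, smul_eq_mul,
      ZeroMemClass.coe_zero, Pi.zero_apply] at h0 h1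
    have hhu : h * u ≠ 0 := mul_ne_zero hh u.ne_zero
    constructor
    · refine (mul_eq_zero.1 ?_).resolve_right hhu
      linear_combination Q 0 * h1 - Q 1 * h0 - s * hPQ
    · refine (mul_eq_zero.1 ?_).resolve_right hhu
      linear_combination P 1 * h0 - P 0 * h1 - t * hPQ
  have hsp : ⊤ ≤ Submodule.span R (Set.range ![(⟨P, hP⟩ : syzygies f g h), ⟨Q, hQ⟩]) := by
    rintro ⟨v, hv⟩ -
    obtain ⟨F, hF⟩ := dvd_cross_of_mem_syzygies hgh hv hQ
    obtain ⟨G, hG⟩ := dvd_cross_of_mem_syzygies hgh hP hv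
    -- Cramer's rule: `F • P + G • Q = u • v`, and the first two coordinates determine a syzygy.
    have hcomb : (↑u⁻¹ * F) • P + (↑u⁻¹ * G) • Q = v := by
      refine eq_of_mem_syzygies hh
        (add_mem (Submodule.smul_mem _ _ hP) (Submodule.smul_mem _ _ hQ)) hv ?_ ?_
      · have key : F * P 0 + G * Q 0 = u * v 0 :=
          mul_left_cancel₀ hh (by linear_combination v 0 * hPQ - P 0 * hF - Q 0 * hG)
        simp only [Pi.add_apply, Pi.smul_apply, smul_eq_mul]
        linear_combination ↑u⁻¹ * key + v 0 * u.inv_mul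
      · have key : F * P 1 + G * Q 1 = u * v 1 :=
          mul_left_cancel₀ hh (by linear_combination v 1 * hPQ - P 1 * hF - Q 1 * hG)
        simp only [Pi.add_apply, Pi.smul_apply, smul_eq_mul]
        linear_combination ↑u⁻¹ * key + v 1 * u.inv_mul
    refine (Submodule.mem_span_range_iff_exists_fun R).2 ⟨![↑u⁻¹ * F, ↑u⁻¹ * G], ?_⟩
    ext1
    simpa [Fin.sum_univ_two] using hcomb
  exact ⟨Module.Basis.mk hli hsp, by simp, by simp⟩

end CommRing

section Polynomial

variable {K : Type*} [Field K] {f g h : K[X]} {n : ℕ} {p P Q : Fin 3 → K[X]}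

theorem eq_zero_of_mem_syzygies_of_apply_zero (hgh : IsCoprime h g)
    (hp : p ∈ syzygies f g h) (h0 : p 0 = 0) (h1 : (p 1).natDegree < h.natDegree) : p = 0 := by
  have hdvd : h ∣ p 1 := by
    rw [mem_syzygies, h0] at hp
    exact hgh.dvd_of_dvd_mul_left ⟨-p 2, by linear_combination hp⟩
  exact eq_of_mem_syzygies (ne_zero_of_natDegree_gt h1) hp (zero_mem _) h0
    (eq_zero_of_dvd_of_natDegree_lt hdvd h1)

theorem exists_linearIndependent_mem_syzygies (hf : f.natDegree ≤ 2 * n)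
    (hg : g.natDegree ≤ 2 * n) (hh : h.natDegree ≤ 2 * n) :
    ∃ P Q : Fin 3 → K[X], P ∈ syzygies f g h ∧ Q ∈ syzygies f g h ∧
      (∀ i, (P i).natDegree ≤ n) ∧ (∀ i, (Q i).natDegree ≤ n) ∧ LinearIndependent K ![P, Q] := by
  let ι : (Fin 3 → Fin (n + 1) → K) →ₗ[K] Fin 3 → K[X] := LinearMap.pi fun i =>
    (degreeLT K (n + 1)).subtype ∘ₗ (degreeLTEquiv K (n + 1)).symm.toLinearMap ∘ₗ LinearMap.proj i
  have hι : LinearMap.ker ι = ⊥ := LinearMap.ker_eq_bot'.2 fun v hv => funext fun i =>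
    (degreeLTEquiv K (n + 1)).symm.map_eq_zero_iff.1 (Subtype.ext (congrFun hv i))
  have hιdeg : ∀ v i, (ι v i).natDegree ≤ n := fun v i =>
    natDegree_le_of_mem_degreeLT_succ ((degreeLTEquiv K (n + 1)).symm (v i)).2
  let Φ := (syzygyMap f g h).restrictScalars K ∘ₗ ι
  have hrange : LinearMap.range Φ ≤ degreeLT K (3 * n + 1) := by
    rintro _ ⟨v, rfl⟩
    rw [degreeLT_succ_eq_degreeLE, mem_degreeLE, ← natDegree_le_iff_degree_le]
    have hmul : ∀ {a : K[X]}, a.natDegree ≤ 2 * n → ∀ i, (a * ι v i).natDegree ≤ 3 * n :=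
      fun ha i => (natDegree_mul_le_of_le ha (hιdeg v i)).trans (by omega)
    exact natDegree_add_le_of_degree_le
      (natDegree_add_le_of_degree_le (hmul hf 0) (hmul hg 1)) (hmul hh 2)
  have hker : 2 ≤ Module.finrank K (LinearMap.ker Φ) := by
    have hdom := LinearMap.finrank_range_add_finrank_ker Φ
    have hcod := Submodule.finrank_mono hrange
    simp only [Module.finrank_pi_fintype, (degreeLTEquiv K _).finrank_eq, Module.finrank_self,
      Finset.sum_const, Finset.card_univ, Fintype.card_fin, smul_eq_mul, mul_one] at hdom hcod
    omega
  obtain ⟨w, hw⟩ := exists_linearIndependent_of_le_finrank hker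
  have hw' := (hw.map' _ (LinearMap.ker Φ).ker_subtype).map' ι hι
  refine ⟨ι (w 0), ι (w 1), (w 0).2, (w 1).2, hιdeg _, hιdeg _, ?_⟩
  have hPQ : ![ι (w 0), ι (w 1)] = ι ∘ (LinearMap.ker Φ).subtype ∘ w := by
    ext i : 1
    fin_cases i <;> rfl
  rwa [hPQ]

theorem cross_ne_zero_of_linearIndependent (hn : 0 < n) (hg : g ≠ 0) (hh : h ≠ 0)
    (hsmall : ∀ p ∈ syzygies f g h, (∀ i, (p i).natDegree < n) → p = 0)
    (hP : P ∈ syzygies f g h) (hQ : Q ∈ syzygies f g h) (hPn : ∀ i, (P i).natDegree ≤ n)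
    (hQn : ∀ i, (Q i).natDegree ≤ n) (hPQ : LinearIndependent K ![P, Q]) :
    P 1 * Q 0 - P 0 * Q 1 ≠ 0 := by
  classical
  intro hcross
  have hP0 : P ≠ 0 := by simpa using hPQ.ne_zero 0
  obtain ⟨a, b, F, rfl, rfl⟩ := exists_eq_smul_of_mul_eq_mul hP0
    (mul_eq_mul_of_mem_syzygies hg hh hP hQ (sub_eq_zero.1 hcross))
  have ha : a ≠ 0 := by rintro rfl; simp at hP0
  have hF0 : F ≠ 0 := by rintro rfl; simp at hP0
  have hF : F ∈ syzygies f g h := by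
    rw [mem_syzygies] at hP ⊢
    simp only [Pi.smul_apply, smul_eq_mul] at hP
    exact (mul_eq_zero.1 (by linear_combination hP)).resolve_left ha
  have hconst : ∀ c : K[X], (∀ i, (c * F i).natDegree ≤ n) → c.natDegree = 0 := by
    intro c hcF
    by_contra hc0
    have hc : c ≠ 0 := by rintro rfl; simp at hc0
    refine hF0 (hsmall F hF fun i => ?_)
    by_cases hFi : F i = 0
    · simpa [hFi] using hn
    · have := hcF i
      rw [natDegree_mul hc hFi] at this
      omega
  obtain ⟨α, rfl⟩ := natDegree_eq_zero.1 (hconst a hPn)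
  obtain ⟨β, rfl⟩ := natDegree_eq_zero.1 (hconst b hQn)
  have hdep : β • (C α • F) + (-α) • (C β • F) = 0 := by
    ext1 i
    simp only [Pi.add_apply, Pi.smul_apply, smul_eq_mul, smul_eq_C_mul, Pi.zero_apply, map_neg]
    ring
  obtain ⟨-, hα⟩ := LinearIndependent.pair_iff.1 hPQ β (-α) hdep
  exact ha (by simpa using hα)

theorem exists_basis_syzygies_of_linearIndependent (hn : 0 < n) (hh : h.natDegree = 2 * n)
    (hgh : IsCoprime h g) (hsmall : ∀ p ∈ syzygies f g h, (∀ i, (p i).natDegree < n) → p = 0)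
    (hP : P ∈ syzygies f g h) (hQ : Q ∈ syzygies f g h) (hPn : ∀ i, (P i).natDegree ≤ n)
    (hQn : ∀ i, (Q i).natDegree ≤ n) (hPQ : LinearIndependent K ![P, Q]) :
    ∃ b : Module.Basis (Fin 2) K[X] (syzygies f g h),
      (b 0 : Fin 3 → K[X]) = P ∧ (b 1 : Fin 3 → K[X]) = Q := by
  have hh0 : h ≠ 0 := by rintro rfl; simp at hh; omega
  have hg0 : g ≠ 0 := by
    rintro rfl
    have := natDegree_eq_zero_of_isUnit (isCoprime_zero_right.1 hgh)
    omega
  obtain ⟨D, hD⟩ := dvd_cross_of_mem_syzygies hgh hP hQ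
  have hD0 : D ≠ 0 := by
    rintro rfl
    exact cross_ne_zero_of_linearIndependent hn hg0 hh0 hsmall hP hQ hPn hQn hPQ
      (by simpa using hD)
  have hDdeg : D.natDegree = 0 := by
    have hle : (P 1 * Q 0 - P 0 * Q 1).natDegree ≤ 2 * n :=
      natDegree_sub_le_of_le (natDegree_mul_le_of_le (hPn 1) (hQn 0))
        (natDegree_mul_le_of_le (hPn 0) (hQn 1)) |>.trans (by omega)
    rw [hD, natDegree_mul hh0 hD0, hh] at hle
    omega
  have hDunit : IsUnit D := by
    rw [isUnit_iff_degree_eq_zero, degree_eq_natDegree hD0, hDdeg, Nat.cast_zero]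
  exact exists_basis_syzygies hh0 hgh hP hQ hDunit hD

theorem vecDeg_eq_of_mem_syzygies
    (hsmall : ∀ p ∈ syzygies f g h, (∀ i, (p i).natDegree < n) → p = 0)
    (hp : p ∈ syzygies f g h) (hp0 : p ≠ 0) (hpn : ∀ i, (p i).natDegree ≤ n) :
    vecDeg p = n := by
  refine le_antisymm (vecDeg_le_iff.2 hpn) (not_lt.1 fun hlt => hp0 (hsmall p hp fun i => ?_))
  exact (vecDeg_le_iff.1 le_rfl i).trans_lt hlt

end Polynomial

end Syzygy

open Syzygy

section Toeplitz

variable {K : Type*} [Field K] {n : ℕ} {t : ℤ → K}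

theorem Ttilde_coeff (m : ℕ) : (Ttilde n t).coeff m =
    if m < 2 * n then (if m < n then t m else t ((m : ℤ) - 2 * n)) else 0 := by
  simp only [Ttilde, finsetSum_coeff, coeff_C_mul_X_pow, Finset.sum_ite_eq, Finset.mem_range]

theorem Ttilde_natDegree_le : (Ttilde n t).natDegree ≤ 2 * n :=
  natDegree_le_iff_coeff_eq_zero.2 fun m hm => by
    rw [Ttilde_coeff, if_neg (by exact_mod_cast hm.not_gt)]

theorem coeff_X_pow_mul_Ttilde_add {j k : ℕ} (hj : j < n) (hk : k < n) :
    (X ^ j * Ttilde n t).coeff k + (X ^ j * Ttilde n t).coeff (2 * n + k) = t (k - j) := by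
  simp only [coeff_X_pow_mul', Ttilde_coeff]
  split_ifs with hjk <;> first | omega | skip
  · rw [add_zero, Nat.cast_sub hjk]
  · rw [zero_add, Nat.cast_sub (by omega)]
    push_cast
    ring_nf

/-- The left side is the `k`-th coefficient of `T̃ * p` reduced modulo `X ^ (2 * n) - 1`; the right
side is the `k`-th entry of `T` applied to the coefficient vector of `p`. -/
theorem coeff_Ttilde_mul_add {p : K[X]} (hp : p.natDegree < n) {k : ℕ} (hk : k < n) :
    (Ttilde n t * p).coeff k + (Ttilde n t * p).coeff (2 * n + k) =
      ∑ j ∈ range n, t (k - j) * p.coeff j := by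
  conv_lhs => rw [p.as_sum_range' n hp]
  simp only [mul_sum, finsetSum_coeff, ← sum_add_distrib]
  refine sum_congr rfl fun j hj => ?_
  rw [← C_mul_X_pow_eq_monomial,
    show Ttilde n t * (C (p.coeff j) * X ^ j) = C (p.coeff j) * (X ^ j * Ttilde n t) by ring,
    coeff_C_mul, coeff_C_mul, ← mul_add, coeff_X_pow_mul_Ttilde_add (mem_range.1 hj) hk, mul_comm]

theorem natDegree_X_pow_sub_one (m : ℕ) : ((X : K[X]) ^ m - 1).natDegree = m := by
  simpa using natDegree_X_pow_sub_C (n := m) (r := (1 : K))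

theorem isCoprime_X_pow_two_mul_sub_one (m : ℕ) : IsCoprime ((X : K[X]) ^ (2 * m) - 1) (X ^ m) :=
  ⟨-1, X ^ m, by ring⟩

theorem eq_zero_of_mem_syzygies_Ttilde
    (hT : IsUnit (Matrix.of fun i j : Fin n => t ((i : ℤ) - (j : ℤ)))) {p : Fin 3 → K[X]}
    (hp : p ∈ syzygies (Ttilde n t) (X ^ n) (X ^ (2 * n) - 1))
    (hdeg : ∀ i, (p i).natDegree < n) : p = 0 := by
  have hcyc : ∀ k < n, (Ttilde n t * p 0).coeff k + (Ttilde n t * p 0).coeff (2 * n + k) = 0 := by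
    intro k hk
    have hk₁ := congrArg (coeff · k) (mem_syzygies.1 hp)
    have hk₂ := congrArg (coeff · (2 * n + k)) (mem_syzygies.1 hp)
    have h₁ : (p 1).coeff (n + k) = 0 := coeff_eq_zero_of_natDegree_lt (by linarith [hdeg 1])
    have h₂ : (p 2).coeff (2 * n + k) = 0 := coeff_eq_zero_of_natDegree_lt (by linarith [hdeg 2])
    simp only [coeff_add, sub_mul, one_mul, coeff_sub, coeff_X_pow_mul', coeff_zero] at hk₁ hk₂
    rw [if_neg (by omega), if_neg (by omega)] at hk₁
    rw [if_pos (by omega), if_pos (by omega), show 2 * n + k - n = n + k by omega,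
      Nat.add_sub_cancel_left, h₁, h₂] at hk₂
    linear_combination hk₁ + hk₂
  have hy : (Matrix.of fun i j : Fin n => t ((i : ℤ) - (j : ℤ))).mulVec (fun j => (p 0).coeff j)
      = 0 := by
    ext k
    rw [Matrix.mulVec, dotProduct, Pi.zero_apply, ← hcyc k k.2, coeff_Ttilde_mul_add (hdeg 0) k.2,
      ← Fin.sum_univ_eq_sum_range (fun j => t (k - j) * (p 0).coeff j)]
    rfl
  have hy0 := Matrix.mulVec_injective_iff_isUnit.2 hT (hy.trans (Matrix.mulVec_zero _).symm)
  have hp0 : p 0 = 0 := by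
    ext m
    by_cases hm : m < n
    · exact congrFun hy0 ⟨m, hm⟩
    · exact coeff_eq_zero_of_natDegree_lt (by linarith [hdeg 0])
  refine eq_zero_of_mem_syzygies_of_apply_zero (isCoprime_X_pow_two_mul_sub_one n) hp hp0 ?_
  rw [natDegree_X_pow_sub_one]
  linarith [hdeg 1]

end Toeplitz

/-- If the Toeplitz matrix `T` is invertible, then the syzygy module
`L(T̃(x), x^n, x^{2n}-1)` admits a basis of two elements, both of degree exactly `n`. -/
theorem stmt_3 {K : Type*} [Field K] (n : ℕ) (hn : 0 < n) (t : ℤ → K)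
    (T : Matrix (Fin n) (Fin n) K) (hT : T = Matrix.of fun i j : Fin n => t ((i : ℤ) - (j : ℤ)))
    (hTinv : IsUnit T)
    (S : Submodule (Polynomial K) (Fin 3 → Polynomial K))
    (hS : ∀ p : Fin 3 → Polynomial K, p ∈ S ↔
      Ttilde n t * p 0 + X ^ n * p 1 + (X ^ (2 * n) - 1) * p 2 = 0) :
    ∃ b : Module.Basis (Fin 2) (Polynomial K) S,
      vecDeg (b 0 : Fin 3 → Polynomial K) = n ∧ vecDeg (b 1 : Fin 3 → Polynomial K) = n := by
  subst hT
  obtain rfl : S = syzygies (Ttilde n t) (X ^ n) (X ^ (2 * n) - 1) :=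
    SetLike.ext fun p => (hS p).trans mem_syzygies.symm
  have hsmall : ∀ p ∈ syzygies (Ttilde n t) (X ^ n) (X ^ (2 * n) - 1),
      (∀ i, (p i).natDegree < n) → p = 0 := fun _ => eq_zero_of_mem_syzygies_Ttilde hTinv
  obtain ⟨P, Q, hP, hQ, hPn, hQn, hPQ⟩ := exists_linearIndependent_mem_syzygies
    (f := Ttilde n t) (g := X ^ n) (h := X ^ (2 * n) - 1) Ttilde_natDegree_le
    ((natDegree_X_pow_le n).trans (by omega)) (natDegree_X_pow_sub_one (2 * n)).le
  obtain ⟨b, rfl, rfl⟩ := exists_basis_syzygies_of_linearIndependent hn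
    (natDegree_X_pow_sub_one _) (isCoprime_X_pow_two_mul_sub_one n) hsmall hP hQ hPn hQn hPQ
  exact ⟨b, vecDeg_eq_of_mem_syzygies hsmall hP (by simpa using hPQ.ne_zero 0) hPn,
    vecDeg_eq_of_mem_syzygies hsmall hQ (by simpa using hPQ.ne_zero 1) hQn⟩
end

section
/- Let T be an invertible mn×mn Toeplitz-block-Toeplitz matrix over a field K with associated bivariate polynomial T̃(x,y) (degree ≤ 2m−1 in x, ≤ 2n−1 in y). Then a vector u ∈ K^{mn} satisfies T·u = g if and only if there exist polynomials h₂,…,h₉ in K[x,y], each of degree ≤ m−1 in x and ≤ n−1 in y, such that T̃(x,y)·u(x,y) + x^m·h₂ + (x^{2m}−1)·h₃ + y^n·h₄ + x^m y^n·h₅ + (x^{2m}−1)y^n·h₆ + (y^{2n}−1)·h₇ + x^m(y^{2n}−1)·h₈ + (x^{2m}−1)(y^{2n}−1)·h₉ = g(x,y). -/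
open MvPolynomial Finset

/-- The bivariate polynomial `T̃(x,y)` associated to a Toeplitz-block-Toeplitz matrix
with entries `t_{α-β}`, of degree `≤ 2m-1` in `x` and `≤ 2n-1` in `y`. -/
noncomputable def Ttilde2 {K : Type*} [Field K] (m n : ℕ) (t : ℤ × ℤ → K) :
    MvPolynomial (Fin 2) K :=
  ∑ i ∈ Finset.range (2 * m), ∑ j ∈ Finset.range (2 * n),
    MvPolynomial.C (t (if i < m then (i : ℤ) else (i : ℤ) - 2 * m,
        if j < n then (j : ℤ) else (j : ℤ) - 2 * n)) * X 0 ^ i * X 1 ^ j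

/-- The polynomial `Σ_{(i,j) ∈ E} v_{ij} x^i y^j` associated to a vector `v ∈ K^{mn}`. -/
noncomputable def vecPoly2 {K : Type*} [Field K] (m n : ℕ) (v : Fin m × Fin n → K) :
    MvPolynomial (Fin 2) K :=
  ∑ α : Fin m × Fin n, MvPolynomial.C (v α) * X 0 ^ (α.1 : ℕ) * X 1 ^ (α.2 : ℕ)

namespace Stmt16Aux

variable {K : Type*} [Field K]

noncomputable def mu (a b : ℕ) : Fin 2 →₀ ℕ := Finsupp.single 0 a + Finsupp.single 1 b

@[simp] lemma mu_apply0 (a b : ℕ) : mu a b 0 = a := by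
  simp [mu, Finsupp.single_apply]

@[simp] lemma mu_apply1 (a b : ℕ) : mu a b 1 = b := by
  simp [mu, Finsupp.single_apply]

lemma eq_mu (d : Fin 2 →₀ ℕ) : d = mu (d 0) (d 1) := by
  ext i; fin_cases i <;> simp [mu, Finsupp.single_apply]

lemma mu_eq_iff {a b : ℕ} {d : Fin 2 →₀ ℕ} : mu a b = d ↔ a = d 0 ∧ b = d 1 := by
  constructor
  · rintro rfl; simp
  · rintro ⟨rfl, rfl⟩; exact (eq_mu d).symm

lemma mu_eq_mu_iff {a b c d : ℕ} : mu a b = mu c d ↔ a = c ∧ b = d := by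
  rw [mu_eq_iff]; simp

lemma mu_add (a b c d : ℕ) : mu a b + mu c d = mu (a + c) (b + d) := by
  ext i; fin_cases i <;> simp

lemma mu_le_iff {a b : ℕ} {d : Fin 2 →₀ ℕ} : mu a b ≤ d ↔ a ≤ d 0 ∧ b ≤ d 1 := by
  constructor
  · intro h; exact ⟨by simpa using h 0, by simpa using h 1⟩
  · rintro ⟨h1, h2⟩ i; fin_cases i <;> simpa

lemma mu_sub (a b c d : ℕ) : mu a b - mu c d = mu (a - c) (b - d) := by
  ext i; fin_cases i <;> simp [Finsupp.tsub_apply]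

lemma monomial_mu (a b : ℕ) (c : K) :
    C c * X 0 ^ a * X 1 ^ b = monomial (mu a b) c := by
  rw [C_apply, X_pow_eq_monomial, X_pow_eq_monomial, monomial_mul, monomial_mul, mu]
  simp

lemma X_pow_mu (a b : ℕ) :
    (X 0 ^ a * X 1 ^ b : MvPolynomial (Fin 2) K) = monomial (mu a b) 1 := by
  have := monomial_mu a b (1 : K); simpa using this

noncomputable def DS (M N : ℕ) (c : ℕ → ℕ → K) : MvPolynomial (Fin 2) K :=
  ∑ i ∈ range M, ∑ j ∈ range N, monomial (mu i j) (c i j)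

lemma coeff_DS (M N : ℕ) (c : ℕ → ℕ → K) (d : Fin 2 →₀ ℕ) :
    coeff d (DS M N c) = if d 0 < M ∧ d 1 < N then c (d 0) (d 1) else 0 := by
  simp only [DS, coeff_sum, coeff_monomial, mu_eq_iff]
  rw [← Finset.sum_product']
  have h : ∀ p ∈ range M ×ˢ range N,
      (if p.1 = d 0 ∧ p.2 = d 1 then c p.1 p.2 else 0)
        = if p = (d 0, d 1) then c p.1 p.2 else 0 := by
    intro p _; simp [Prod.ext_iff]
  rw [Finset.sum_congr rfl h,
    Finset.sum_ite_eq' ((range M) ×ˢ (range N)) (d 0, d 1) (fun p => c p.1 p.2)]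
  simp [Finset.mem_product]


lemma DS_add (M N : ℕ) (c c' : ℕ → ℕ → K) :
    DS M N c + DS M N c' = DS M N (fun i j => c i j + c' i j) := by
  simp only [DS, ← Finset.sum_add_distrib]
  exact Finset.sum_congr rfl fun i _ => Finset.sum_congr rfl fun j _ => (map_add _ _ _).symm

lemma DS_neg (M N : ℕ) (c : ℕ → ℕ → K) :
    -DS M N c = DS M N (fun i j => -(c i j)) := by
  simp [DS, ← Finset.sum_neg_distrib]

lemma DS_congr {M N : ℕ} {c c' : ℕ → ℕ → K}
    (h : ∀ i < M, ∀ j < N, c i j = c' i j) : DS M N c = DS M N c' := by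
  refine Finset.sum_congr rfl fun i hi => Finset.sum_congr rfl fun j hj => ?_
  rw [h i (mem_range.1 hi) j (mem_range.1 hj)]

lemma degreeOf_DS_0 {M N : ℕ} (hM : 0 < M) (c : ℕ → ℕ → K) :
    degreeOf 0 (DS M N c) < M := by
  rw [degreeOf_lt_iff hM]
  intro d hd
  rw [mem_support_iff, coeff_DS] at hd
  by_contra h
  exact hd (by rw [if_neg (by push_neg; intro h'; omega)])

lemma degreeOf_DS_1 {M N : ℕ} (hN : 0 < N) (c : ℕ → ℕ → K) :
    degreeOf 1 (DS M N c) < N := by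
  rw [degreeOf_lt_iff hN]
  intro d hd
  rw [mem_support_iff, coeff_DS] at hd
  by_contra h
  exact hd (by rw [if_neg (by push_neg; intro h'; omega)])

/-- coefficient vanishing from degree bounds -/
lemma coeff_vanish {P : MvPolynomial (Fin 2) K} {M N : ℕ}
    (h0 : degreeOf 0 P < M) (h1 : degreeOf 1 P < N) {a b : ℕ}
    (h : M ≤ a ∨ N ≤ b) : coeff (mu a b) P = 0 := by
  by_contra hc
  rw [show ¬coeff (mu a b) P = 0 ↔ mu a b ∈ P.support from (mem_support_iff).symm] at hc
  rcases h with h | h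
  · have := (degreeOf_lt_iff (by omega)).1 h0 _ hc
    simp at this; omega
  · have := (degreeOf_lt_iff (by omega)).1 h1 _ hc
    simp at this; omega

/-- truncation: a degree-bounded polynomial equals the double sum of its coefficients -/
lemma eq_DS_of_bounds {P : MvPolynomial (Fin 2) K} {M N : ℕ}
    (h0 : degreeOf 0 P < M) (h1 : degreeOf 1 P < N) :
    P = DS M N (fun i j => coeff (mu i j) P) := by
  ext d
  rw [coeff_DS]
  split_ifs with h
  · congr 1; exact eq_mu d
  · rw [eq_mu d, coeff_vanish h0 h1 (by omega)]

lemma sum_fin_prod {M : Type*} [AddCommMonoid M] (m n : ℕ) (f : ℕ → ℕ → M) :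
    ∑ β : Fin m × Fin n, f β.1 β.2 = ∑ k ∈ range m, ∑ l ∈ range n, f k l := by
  rw [Fintype.sum_prod_type]
  rw [← Fin.sum_univ_eq_sum_range (fun k => ∑ l ∈ range n, f k l) m]
  exact Finset.sum_congr rfl fun a _ => Fin.sum_univ_eq_sum_range (fun l => f a l) n

/-- extension of a vector to ℕ × ℕ -/
noncomputable def vE (m n : ℕ) (v : Fin m × Fin n → K) (i j : ℕ) : K :=
  if h : i < m ∧ j < n then v (⟨i, h.1⟩, ⟨j, h.2⟩) else 0

lemma vE_coe {m n : ℕ} (v : Fin m × Fin n → K) (a : Fin m) (b : Fin n) :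
    vE m n v a b = v (a, b) := by
  rw [vE, dif_pos ⟨a.isLt, b.isLt⟩]

noncomputable def tE (m n : ℕ) (t : ℤ × ℤ → K) (i j : ℕ) : K :=
  t (if i < m then (i : ℤ) else (i : ℤ) - 2 * m, if j < n then (j : ℤ) else (j : ℤ) - 2 * n)

lemma Ttilde2_eq (m n : ℕ) (t : ℤ × ℤ → K) :
    Ttilde2 m n t = DS (2 * m) (2 * n) (tE m n t) := by
  refine Finset.sum_congr rfl fun i _ => Finset.sum_congr rfl fun j _ => ?_
  rw [monomial_mu]; rfl

lemma vecPoly2_eq (m n : ℕ) (v : Fin m × Fin n → K) :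
    vecPoly2 m n v = DS m n (vE m n v) := by
  rw [vecPoly2, DS]
  rw [show (∑ α : Fin m × Fin n, C (v α) * X 0 ^ (α.1 : ℕ) * X 1 ^ (α.2 : ℕ))
      = ∑ α : Fin m × Fin n, monomial (mu (α.1 : ℕ) (α.2 : ℕ)) (vE m n v α.1 α.2) from
    Finset.sum_congr rfl fun α _ => by
      rw [monomial_mu, vE_coe]]
  exact sum_fin_prod m n (fun k l => monomial (mu k l) (vE m n v k l))

lemma vecPoly2_inj {m n : ℕ} {v w : Fin m × Fin n → K}
    (h : vecPoly2 m n v = vecPoly2 m n w) : v = w := by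
  funext α
  have h2 := congrArg (coeff (mu (α.1 : ℕ) (α.2 : ℕ))) h
  rw [vecPoly2_eq, vecPoly2_eq, coeff_DS, coeff_DS] at h2
  simp only [mu_apply0, mu_apply1] at h2
  have hc : (α.1 : ℕ) < m ∧ (α.2 : ℕ) < n := ⟨α.1.isLt, α.2.isLt⟩
  rw [if_pos hc, vE, vE, dif_pos hc] at h2
  simpa using h2


lemma sum_range_three_mul {M : Type*} [AddCommMonoid M] (m : ℕ) (f : ℕ → M) :
    ∑ i ∈ range (3 * m), f i = ∑ a ∈ range 3, ∑ i ∈ range m, f (a * m + i) := by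
  rw [show 3 * m = m + (m + m) by ring, Finset.sum_range_add, Finset.sum_range_add]
  simp only [Finset.sum_range_succ, Finset.sum_range_zero, zero_add]
  rw [Finset.sum_congr rfl (fun i (_ : i ∈ range m) => congrArg f (show (0 * m + i) = i by ring))]
  rw [Finset.sum_congr rfl (fun i (_ : i ∈ range m) => congrArg f (show (1 * m + i) = m + i by ring))]
  rw [Finset.sum_congr rfl (fun i (_ : i ∈ range m) => congrArg f (show (2 * m + i) = m + (m + i) by ring))]
  abel

/-- block extraction -/
noncomputable def blk (m n a b : ℕ) (P : MvPolynomial (Fin 2) K) : MvPolynomial (Fin 2) K :=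
  DS m n (fun i j => coeff (mu (a * m + i) (b * n + j)) P)

lemma decompose {m n : ℕ} {P : MvPolynomial (Fin 2) K}
    (h0 : degreeOf 0 P < 3 * m) (h1 : degreeOf 1 P < 3 * n) :
    P = ∑ a ∈ range 3, ∑ b ∈ range 3,
      X 0 ^ (a * m) * X 1 ^ (b * n) * blk m n a b P := by
  conv_lhs => rw [eq_DS_of_bounds h0 h1]
  rw [DS, sum_range_three_mul m (fun i => ∑ j ∈ range (3 * n), monomial (mu i j) (coeff (mu i j) P))]
  refine Finset.sum_congr rfl fun a _ => ?_
  rw [Finset.sum_congr rfl (fun i (_ : i ∈ range m) =>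
    sum_range_three_mul n (fun j => monomial (mu (a * m + i) j) (coeff (mu (a * m + i) j) P)))]
  rw [Finset.sum_comm]
  refine Finset.sum_congr rfl fun b _ => ?_
  rw [blk, DS, Finset.mul_sum]
  refine Finset.sum_congr rfl fun i _ => ?_
  rw [Finset.mul_sum]
  refine Finset.sum_congr rfl fun j _ => ?_
  rw [X_pow_mu, monomial_mul, mu_add, one_mul]

/-- key injectivity of the block decomposition -/
lemma blocks_inj {m n : ℕ} (hm : 0 < m) (hn : 0 < n)
    (R : ℕ → ℕ → MvPolynomial (Fin 2) K)
    (hbd : ∀ a < 3, ∀ b < 3, degreeOf 0 (R a b) < m ∧ degreeOf 1 (R a b) < n)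
    (hsum : ∑ a ∈ range 3, ∑ b ∈ range 3, X 0 ^ (a * m) * X 1 ^ (b * n) * R a b = 0) :
    ∀ a < 3, ∀ b < 3, R a b = 0 := by
  intro a ha b hb
  ext d
  rw [coeff_zero, eq_mu d]
  set i := d 0 with hi
  set j := d 1 with hj
  by_cases hij : i < m ∧ j < n
  · have h2 := congrArg (coeff (mu (a * m + i) (b * n + j))) hsum
    simp only [coeff_sum, coeff_zero] at h2
    have key : ∀ a' ∈ range 3, ∀ b' ∈ range 3,
        coeff (mu (a * m + i) (b * n + j)) (X 0 ^ (a' * m) * X 1 ^ (b' * n) * R a' b')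
          = if a' = a ∧ b' = b then coeff (mu i j) (R a b) else 0 := by
      intro a' ha' b' hb'
      rw [mem_range] at ha' hb'
      have f1 : ∀ x y : ℕ, x < y → x * m + m ≤ y * m := fun x y h => by
        have h2 : (x + 1) * m ≤ y * m := Nat.mul_le_mul_right m h
        rw [add_mul, one_mul] at h2; exact h2
      have f2 : ∀ x y : ℕ, x < y → x * n + n ≤ y * n := fun x y h => by
        have h2 : (x + 1) * n ≤ y * n := Nat.mul_le_mul_right n h
        rw [add_mul, one_mul] at h2; exact h2
      rw [X_pow_mu, coeff_monomial_mul', mu_sub]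
      simp only [mu_apply0, mu_apply1, one_mul]
      split_ifs with hle heq heq2
      · rw [mu_le_iff, mu_apply0, mu_apply1] at hle
        obtain ⟨rfl, rfl⟩ := heq
        congr 1
        rw [mu_eq_mu_iff]; omega
      · rw [mu_le_iff, mu_apply0, mu_apply1] at hle
        rcases Nat.lt_trichotomy a' a with h | rfl | h
        · exact coeff_vanish (hbd a' (by omega) b' (by omega)).1
            (hbd a' (by omega) b' (by omega)).2 (Or.inl (by have := f1 a' a h; omega))
        · rcases Nat.lt_trichotomy b' b with h | h | h
          · exact coeff_vanish (hbd a' (by omega) b' (by omega)).1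
              (hbd a' (by omega) b' (by omega)).2 (Or.inr (by have := f2 b' b h; omega))
          · exact absurd ⟨rfl, h⟩ heq
          · have := f2 b b' h; omega
        · have := f1 a a' h; omega
      · obtain ⟨rfl, rfl⟩ := heq2
        rw [mu_le_iff, mu_apply0, mu_apply1] at hle
        omega
      · rfl
    rw [Finset.sum_congr rfl (fun a' ha' => Finset.sum_congr rfl (key a' ha'))] at h2
    rw [← Finset.sum_product'] at h2
    have h3 : ∀ p ∈ range 3 ×ˢ range 3,
        (if p.1 = a ∧ p.2 = b then coeff (mu i j) (R a b) else 0)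
          = if p = (a, b) then coeff (mu i j) (R a b) else 0 := by
      intro p _; simp [Prod.ext_iff]
    rw [Finset.sum_congr rfl h3, Finset.sum_ite_eq' (range 3 ×ˢ range 3) (a, b)
      (fun _ => coeff (mu i j) (R a b))] at h2
    rw [if_pos (by simp [Finset.mem_product]; omega)] at h2
    exact h2
  · exact coeff_vanish (hbd a ha b hb).1 (hbd a ha b hb).2 (by omega)


lemma sum_swap4 {M : Type*} [AddCommMonoid M] (s1 s2 s3 s4 : Finset ℕ) (f : ℕ → ℕ → ℕ → ℕ → M) :
    ∑ a ∈ s1, ∑ b ∈ s2, ∑ k ∈ s3, ∑ l ∈ s4, f a b k l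
      = ∑ k ∈ s3, ∑ l ∈ s4, ∑ a ∈ s1, ∑ b ∈ s2, f a b k l := by
  have h1 : ∀ a : ℕ, (∑ b ∈ s2, ∑ k ∈ s3, ∑ l ∈ s4, f a b k l)
      = ∑ k ∈ s3, ∑ b ∈ s2, ∑ l ∈ s4, f a b k l := fun a => Finset.sum_comm
  rw [Finset.sum_congr rfl (fun a _ => h1 a)]
  rw [show (∑ a ∈ s1, ∑ k ∈ s3, ∑ b ∈ s2, ∑ l ∈ s4, f a b k l)
      = ∑ k ∈ s3, ∑ a ∈ s1, ∑ b ∈ s2, ∑ l ∈ s4, f a b k l from Finset.sum_comm]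
  refine Finset.sum_congr rfl fun k _ => ?_
  have h2 : ∀ a : ℕ, (∑ b ∈ s2, ∑ l ∈ s4, f a b k l)
      = ∑ l ∈ s4, ∑ b ∈ s2, f a b k l := fun a => Finset.sum_comm
  rw [Finset.sum_congr rfl (fun a _ => h2 a)]
  exact Finset.sum_comm

lemma P_expand (m n : ℕ) (t : ℤ × ℤ → K) (u : Fin m × Fin n → K) :
    Ttilde2 m n t * vecPoly2 m n u
      = ∑ k ∈ range m, ∑ l ∈ range n, ∑ a ∈ range (2 * m), ∑ b ∈ range (2 * n),
          monomial (mu (a + k) (b + l)) (tE m n t a b * vE m n u k l) := by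
  rw [Ttilde2_eq, vecPoly2_eq, DS, DS]
  simp only [Finset.sum_mul, Finset.mul_sum, monomial_mul, mu_add]

set_option maxHeartbeats 1000000 in
lemma keyB (m n : ℕ) (t : ℤ × ℤ → K) (u : Fin m × Fin n → K)
    (i j : ℕ) (hi : i < m) (hj : j < n) :
    coeff (mu i j) (Ttilde2 m n t * vecPoly2 m n u)
      + coeff (mu (2 * m + i) j) (Ttilde2 m n t * vecPoly2 m n u)
      + coeff (mu i (2 * n + j)) (Ttilde2 m n t * vecPoly2 m n u)
      + coeff (mu (2 * m + i) (2 * n + j)) (Ttilde2 m n t * vecPoly2 m n u)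
      = ∑ k ∈ range m, ∑ l ∈ range n, t ((i : ℤ) - k, (j : ℤ) - l) * vE m n u k l := by
  rw [P_expand]
  simp only [coeff_sum, coeff_monomial, mu_eq_mu_iff]
  simp only [← Finset.sum_add_distrib]
  refine Finset.sum_congr rfl fun k hk => Finset.sum_congr rfl fun l hl => ?_
  rw [mem_range] at hk hl
  have key : ∀ a ∈ range (2 * m), ∀ b ∈ range (2 * n),
      ((if a + k = i ∧ b + l = j then tE m n t a b * vE m n u k l else 0)
        + (if a + k = 2 * m + i ∧ b + l = j then tE m n t a b * vE m n u k l else 0)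
        + (if a + k = i ∧ b + l = 2 * n + j then tE m n t a b * vE m n u k l else 0)
        + (if a + k = 2 * m + i ∧ b + l = 2 * n + j then tE m n t a b * vE m n u k l else 0))
      = if a = (if k ≤ i then i - k else 2 * m + i - k)
            ∧ b = (if l ≤ j then j - l else 2 * n + j - l)
          then tE m n t a b * vE m n u k l else 0 := by
    intro a ha b hb
    rw [mem_range] at ha hb
    split_ifs <;> first | omega | simp
  rw [Finset.sum_congr rfl (fun a ha => Finset.sum_congr rfl (key a ha))]
  rw [← Finset.sum_product']
  have h3 : ∀ p ∈ range (2 * m) ×ˢ range (2 * n),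
      (if p.1 = (if k ≤ i then i - k else 2 * m + i - k)
          ∧ p.2 = (if l ≤ j then j - l else 2 * n + j - l)
        then tE m n t p.1 p.2 * vE m n u k l else 0)
      = if p = ((if k ≤ i then i - k else 2 * m + i - k),
          (if l ≤ j then j - l else 2 * n + j - l))
        then tE m n t p.1 p.2 * vE m n u k l else 0 := by
    intro p _; simp [Prod.ext_iff]
  rw [Finset.sum_congr rfl h3, Finset.sum_ite_eq' (range (2 * m) ×ˢ range (2 * n)) _
    (fun p => tE m n t p.1 p.2 * vE m n u k l)]
  rw [if_pos (by simp only [Finset.mem_product, mem_range]; constructor <;> split_ifs <;> omega)]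
  congr 1
  rw [tE]
  exact congrArg t (by
    rw [Prod.ext_iff]
    constructor <;> (dsimp only; split_ifs <;> omega))

lemma keyB' {m n : ℕ} (t : ℤ × ℤ → K) (T : Matrix (Fin m × Fin n) (Fin m × Fin n) K)
    (hT : T = Matrix.of fun α β : Fin m × Fin n =>
      t ((α.1 : ℤ) - (β.1 : ℤ), (α.2 : ℤ) - (β.2 : ℤ)))
    (u : Fin m × Fin n → K) (α : Fin m × Fin n) :
    T.mulVec u α = ∑ k ∈ range m, ∑ l ∈ range n,
      t ((α.1 : ℤ) - k, (α.2 : ℤ) - l) * vE m n u k l := by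
  subst hT
  rw [Matrix.mulVec, dotProduct]
  rw [show (∑ β : Fin m × Fin n, Matrix.of (fun α β : Fin m × Fin n =>
        t ((α.1 : ℤ) - (β.1 : ℤ), (α.2 : ℤ) - (β.2 : ℤ))) α β * u β)
      = ∑ β : Fin m × Fin n, t ((α.1 : ℤ) - β.1, (α.2 : ℤ) - β.2) * vE m n u β.1 β.2 from
    Finset.sum_congr rfl fun β _ => by rw [vE_coe, Matrix.of_apply, Prod.mk.eta]]
  exact sum_fin_prod m n (fun k l => t ((α.1 : ℤ) - k, (α.2 : ℤ) - l) * vE m n u k l)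


lemma deg_lt_add {c : ℕ} {v : Fin 2} {p q : MvPolynomial (Fin 2) K}
    (hp : degreeOf v p < c) (hq : degreeOf v q < c) : degreeOf v (p + q) < c :=
  lt_of_le_of_lt (degreeOf_add_le _ _ _) (max_lt hp hq)

lemma deg_lt_neg {c : ℕ} {v : Fin 2} {p : MvPolynomial (Fin 2) K}
    (hp : degreeOf v p < c) : degreeOf v (-p) < c := by rwa [degreeOf_neg]

lemma deg_lt_sub {c : ℕ} {v : Fin 2} {p q : MvPolynomial (Fin 2) K}
    (hp : degreeOf v p < c) (hq : degreeOf v q < c) : degreeOf v (p - q) < c := by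
  rw [sub_eq_add_neg]; exact deg_lt_add hp (deg_lt_neg hq)

lemma blocks_inj9 {m n : ℕ} (hm : 0 < m) (hn : 0 < n)
    (R00 R01 R02 R10 R11 R12 R20 R21 R22 : MvPolynomial (Fin 2) K)
    (h00 : degreeOf 0 R00 < m ∧ degreeOf 1 R00 < n)
    (h01 : degreeOf 0 R01 < m ∧ degreeOf 1 R01 < n)
    (h02 : degreeOf 0 R02 < m ∧ degreeOf 1 R02 < n)
    (h10 : degreeOf 0 R10 < m ∧ degreeOf 1 R10 < n)
    (h11 : degreeOf 0 R11 < m ∧ degreeOf 1 R11 < n)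
    (h12 : degreeOf 0 R12 < m ∧ degreeOf 1 R12 < n)
    (h20 : degreeOf 0 R20 < m ∧ degreeOf 1 R20 < n)
    (h21 : degreeOf 0 R21 < m ∧ degreeOf 1 R21 < n)
    (h22 : degreeOf 0 R22 < m ∧ degreeOf 1 R22 < n)
    (hsum : R00 + X 0 ^ m * R10 + X 0 ^ (2 * m) * R20
      + X 1 ^ n * R01 + X 0 ^ m * X 1 ^ n * R11 + X 0 ^ (2 * m) * X 1 ^ n * R21
      + X 1 ^ (2 * n) * R02 + X 0 ^ m * X 1 ^ (2 * n) * R12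
      + X 0 ^ (2 * m) * X 1 ^ (2 * n) * R22 = 0) :
    R00 = 0 ∧ R20 = 0 ∧ R02 = 0 ∧ R22 = 0 := by
  have hz := blocks_inj hm hn
    (fun a b =>
      if a = 0 then (if b = 0 then R00 else if b = 1 then R01 else R02)
      else if a = 1 then (if b = 0 then R10 else if b = 1 then R11 else R12)
      else (if b = 0 then R20 else if b = 1 then R21 else R22))
    (by
      intro a ha b hb
      interval_cases a <;> interval_cases b <;> norm_num <;>
        (first | exact h00 | exact h01 | exact h02 | exact h10 | exact h11 | exact h12 | exact h20 | exact h21 | exact h22))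
    (by
      simp only [Finset.sum_range_succ, Finset.sum_range_zero, zero_add, zero_mul,
        pow_zero, one_mul, mul_one]
      norm_num
      linear_combination hsum)
  have z00 := hz 0 (by norm_num) 0 (by norm_num)
  have z20 := hz 2 (by norm_num) 0 (by norm_num)
  have z02 := hz 0 (by norm_num) 2 (by norm_num)
  have z22 := hz 2 (by norm_num) 2 (by norm_num)
  norm_num at z00 z20 z02 z22
  exact ⟨z00, z20, z02, z22⟩

end Stmt16Aux

open Stmt16Aux in
set_option maxHeartbeats 1000000 in
/-- For an invertible Toeplitz-block-Toeplitz matrix `T`, `T u = g` iff there exist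
`h₂, …, h₉` of degree `≤ m-1` in `x` and `≤ n-1` in `y` with
`T̃ u + x^m h₂ + (x^{2m}-1) h₃ + y^n h₄ + x^m y^n h₅ + (x^{2m}-1) y^n h₆
 + (y^{2n}-1) h₇ + x^m (y^{2n}-1) h₈ + (x^{2m}-1)(y^{2n}-1) h₉ = g`. -/
theorem stmt_16 {K : Type*} [Field K] (m n : ℕ) (hm : 0 < m) (hn : 0 < n)
    (t : ℤ × ℤ → K)
    (T : Matrix (Fin m × Fin n) (Fin m × Fin n) K)
    (hT : T = Matrix.of fun α β : Fin m × Fin n =>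
      t ((α.1 : ℤ) - (β.1 : ℤ), (α.2 : ℤ) - (β.2 : ℤ)))
    (hTinv : IsUnit T)
    (u g : Fin m × Fin n → K) :
    T.mulVec u = g ↔
      ∃ h₂ h₃ h₄ h₅ h₆ h₇ h₈ h₉ : MvPolynomial (Fin 2) K,
        (∀ h ∈ [h₂, h₃, h₄, h₅, h₆, h₇, h₈, h₉], h.degreeOf 0 < m ∧ h.degreeOf 1 < n) ∧
        Ttilde2 m n t * vecPoly2 m n u
          + X 0 ^ m * h₂ + (X 0 ^ (2 * m) - 1) * h₃
          + X 1 ^ n * h₄ + X 0 ^ m * X 1 ^ n * h₅ + (X 0 ^ (2 * m) - 1) * X 1 ^ n * h₆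
          + (X 1 ^ (2 * n) - 1) * h₇ + X 0 ^ m * (X 1 ^ (2 * n) - 1) * h₈
          + (X 0 ^ (2 * m) - 1) * (X 1 ^ (2 * n) - 1) * h₉
          = vecPoly2 m n g := by
  obtain ⟨P, hPdef⟩ : ∃ P, P = Ttilde2 m n t * vecPoly2 m n u := ⟨_, rfl⟩
  rw [show Ttilde2 m n t * vecPoly2 m n u = P from hPdef.symm]
  have Hblk0 : ∀ a b : ℕ, degreeOf 0 (blk m n a b P) < m := fun a b => degreeOf_DS_0 hm _
  have Hblk1 : ∀ a b : ℕ, degreeOf 1 (blk m n a b P) < n := fun a b => degreeOf_DS_1 hn _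
  have Hg0 : degreeOf 0 (vecPoly2 m n g) < m := by
    rw [vecPoly2_eq]; exact degreeOf_DS_0 hm _
  have Hg1 : degreeOf 1 (vecPoly2 m n g) < n := by
    rw [vecPoly2_eq]; exact degreeOf_DS_1 hn _
  have hP0 : degreeOf 0 P < 3 * m := by
    have h1 : degreeOf 0 (Ttilde2 m n t) < 2 * m := by
      rw [Ttilde2_eq]; exact degreeOf_DS_0 (by omega) _
    have h2 : degreeOf 0 (vecPoly2 m n u) < m := by
      rw [vecPoly2_eq]; exact degreeOf_DS_0 hm _
    have h3 := degreeOf_mul_le (0 : Fin 2) (Ttilde2 m n t) (vecPoly2 m n u)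
    rw [hPdef]; omega
  have hP1 : degreeOf 1 P < 3 * n := by
    have h1 : degreeOf 1 (Ttilde2 m n t) < 2 * n := by
      rw [Ttilde2_eq]; exact degreeOf_DS_1 (by omega) _
    have h2 : degreeOf 1 (vecPoly2 m n u) < n := by
      rw [vecPoly2_eq]; exact degreeOf_DS_1 hn _
    have h3 := degreeOf_mul_le (1 : Fin 2) (Ttilde2 m n t) (vecPoly2 m n u)
    rw [hPdef]; omega
  have hdec := decompose hP0 hP1
  simp only [Finset.sum_range_succ, Finset.sum_range_zero, zero_add, zero_mul,
    pow_zero, one_mul, mul_one] at hdec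
  have hB : blk m n 0 0 P + blk m n 2 0 P + blk m n 0 2 P + blk m n 2 2 P
      = vecPoly2 m n (T.mulVec u) := by
    simp only [blk]
    rw [DS_add, DS_add, DS_add, vecPoly2_eq]
    refine DS_congr fun i hi j hj => ?_
    simp only [zero_mul, zero_add]
    rw [hPdef, keyB m n t u i j hi hj]
    rw [show vE m n (T.mulVec u) i j = T.mulVec u (⟨i, hi⟩, ⟨j, hj⟩) from dif_pos ⟨hi, hj⟩]
    rw [keyB' t T hT u (⟨i, hi⟩, ⟨j, hj⟩)]
  constructor
  · intro hTu
    refine ⟨-(blk m n 1 0 P) - blk m n 1 2 P, -(blk m n 2 0 P) - blk m n 2 2 P,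
            -(blk m n 0 1 P) - blk m n 2 1 P, -(blk m n 1 1 P), -(blk m n 2 1 P),
            -(blk m n 0 2 P) - blk m n 2 2 P, -(blk m n 1 2 P), -(blk m n 2 2 P), ?_, ?_⟩
    · intro h hh
      simp only [List.mem_cons, List.not_mem_nil, or_false] at hh
      rcases hh with rfl | rfl | rfl | rfl | rfl | rfl | rfl | rfl
      · exact ⟨deg_lt_sub (deg_lt_neg (Hblk0 _ _)) (Hblk0 _ _),
          deg_lt_sub (deg_lt_neg (Hblk1 _ _)) (Hblk1 _ _)⟩
      · exact ⟨deg_lt_sub (deg_lt_neg (Hblk0 _ _)) (Hblk0 _ _),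
          deg_lt_sub (deg_lt_neg (Hblk1 _ _)) (Hblk1 _ _)⟩
      · exact ⟨deg_lt_sub (deg_lt_neg (Hblk0 _ _)) (Hblk0 _ _),
          deg_lt_sub (deg_lt_neg (Hblk1 _ _)) (Hblk1 _ _)⟩
      · exact ⟨deg_lt_neg (Hblk0 _ _), deg_lt_neg (Hblk1 _ _)⟩
      · exact ⟨deg_lt_neg (Hblk0 _ _), deg_lt_neg (Hblk1 _ _)⟩
      · exact ⟨deg_lt_sub (deg_lt_neg (Hblk0 _ _)) (Hblk0 _ _),
          deg_lt_sub (deg_lt_neg (Hblk1 _ _)) (Hblk1 _ _)⟩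
      · exact ⟨deg_lt_neg (Hblk0 _ _), deg_lt_neg (Hblk1 _ _)⟩
      · exact ⟨deg_lt_neg (Hblk0 _ _), deg_lt_neg (Hblk1 _ _)⟩
    · rw [hTu] at hB
      linear_combination hdec + hB
  · rintro ⟨h₂, h₃, h₄, h₅, h₆, h₇, h₈, h₉, hbd, heq⟩
    have B2 := hbd h₂ (by simp)
    have B3 := hbd h₃ (by simp)
    have B4 := hbd h₄ (by simp)
    have B5 := hbd h₅ (by simp)
    have B6 := hbd h₆ (by simp)
    have B7 := hbd h₇ (by simp)
    have B8 := hbd h₈ (by simp)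
    have B9 := hbd h₉ (by simp)
    obtain ⟨z00, z20, z02, z22⟩ := blocks_inj9 hm hn
      (blk m n 0 0 P - h₃ - h₇ + h₉ - vecPoly2 m n g)
      (blk m n 0 1 P + h₄ - h₆)
      (blk m n 0 2 P + h₇ - h₉)
      (blk m n 1 0 P + h₂ - h₈)
      (blk m n 1 1 P + h₅)
      (blk m n 1 2 P + h₈)
      (blk m n 2 0 P + h₃ - h₉)
      (blk m n 2 1 P + h₆)
      (blk m n 2 2 P + h₉)
      ⟨deg_lt_sub (deg_lt_add (deg_lt_sub (deg_lt_sub (Hblk0 _ _) B3.1) B7.1) B9.1) Hg0,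
       deg_lt_sub (deg_lt_add (deg_lt_sub (deg_lt_sub (Hblk1 _ _) B3.2) B7.2) B9.2) Hg1⟩
      ⟨deg_lt_sub (deg_lt_add (Hblk0 _ _) B4.1) B6.1,
       deg_lt_sub (deg_lt_add (Hblk1 _ _) B4.2) B6.2⟩
      ⟨deg_lt_sub (deg_lt_add (Hblk0 _ _) B7.1) B9.1,
       deg_lt_sub (deg_lt_add (Hblk1 _ _) B7.2) B9.2⟩
      ⟨deg_lt_sub (deg_lt_add (Hblk0 _ _) B2.1) B8.1,
       deg_lt_sub (deg_lt_add (Hblk1 _ _) B2.2) B8.2⟩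
      ⟨deg_lt_add (Hblk0 _ _) B5.1, deg_lt_add (Hblk1 _ _) B5.2⟩
      ⟨deg_lt_add (Hblk0 _ _) B8.1, deg_lt_add (Hblk1 _ _) B8.2⟩
      ⟨deg_lt_sub (deg_lt_add (Hblk0 _ _) B3.1) B9.1,
       deg_lt_sub (deg_lt_add (Hblk1 _ _) B3.2) B9.2⟩
      ⟨deg_lt_add (Hblk0 _ _) B6.1, deg_lt_add (Hblk1 _ _) B6.2⟩
      ⟨deg_lt_add (Hblk0 _ _) B9.1, deg_lt_add (Hblk1 _ _) B9.2⟩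
      (by linear_combination heq - hdec)
    exact vecPoly2_inj (by linear_combination z00 + z20 + z02 + z22 - hB)
end

section
/- Let T be an invertible mn×mn Toeplitz-block-Toeplitz matrix and let 𝐓 denote the 9-vector of bivariate polynomials (T̃(x,y), x^m, x^{2m}−1, y^n, x^m y^n, (x^{2m}−1)y^n, y^{2n}−1, x^m(y^{2n}−1), (x^{2m}−1)(y^{2n}−1)). Then the only syzygy (h₁,…,h₉) of 𝐓 with every h_i of degree ≤ m−1 in x and ≤ n−1 in y is the zero syzygy. -/
open MvPolynomial Finset

/-- The vector `𝐓 = (T̃(x,y), x^m, x^{2m}-1, y^n, x^m y^n, (x^{2m}-1) y^n, y^{2n}-1,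
 x^m (y^{2n}-1), (x^{2m}-1)(y^{2n}-1))`. -/
noncomputable def Tvec {K : Type*} [Field K] (m n : ℕ) (t : ℤ × ℤ → K) :
    Fin 9 → MvPolynomial (Fin 2) K :=
  ![Ttilde2 m n t, X 0 ^ m, X 0 ^ (2 * m) - 1, X 1 ^ n, X 0 ^ m * X 1 ^ n,
    (X 0 ^ (2 * m) - 1) * X 1 ^ n, X 1 ^ (2 * n) - 1, X 0 ^ m * (X 1 ^ (2 * n) - 1),
    (X 0 ^ (2 * m) - 1) * (X 1 ^ (2 * n) - 1)]

/-!
Reading a syzygy modulo `(x^{2m} - 1, y^{2n} - 1)` at a monomial `x^i y^j` with `i < m`, `j < n`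
gives `(T v)(i, j) = 0`, where `v` is the coefficient vector of `h 0`: the entries of `𝐓` other
than `T̃` contribute only through `x^m`, `y^n`, `x^m y^n`, which shift the box `[0, m) × [0, n)`
off itself, while `T̃` reduced in this way is the Toeplitz matrix. Invertibility of `T` gives
`h 0 = 0`. What remains of the syzygy is `∑_{a, b < 3} x^{am} y^{bn} g_{ab}` with every `g_{ab}` a
signed sum of the `h i` supported in the box; these blocks have disjoint supports, so all
`g_{ab}` vanish, and this triangular system forces `h = 0`.
-/

namespace ToeplitzSyzygy

section CommSemiring

variable {R : Type*} [CommSemiring R]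

noncomputable def bidegree (a b : ℕ) : Fin 2 →₀ ℕ := Finsupp.single 0 a + Finsupp.single 1 b

@[simp] lemma bidegree_apply_zero (a b : ℕ) : bidegree a b 0 = a := by simp [bidegree]

@[simp] lemma bidegree_apply_one (a b : ℕ) : bidegree a b 1 = b := by simp [bidegree]

lemma bidegree_apply_eta (d : Fin 2 →₀ ℕ) : bidegree (d 0) (d 1) = d := by
  ext x; fin_cases x <;> simp

lemma bidegree_inj {a b a' b' : ℕ} : bidegree a b = bidegree a' b' ↔ a = a' ∧ b = b' := by
  refine ⟨fun h => ⟨by simpa using congr($h 0), by simpa using congr($h 1)⟩, ?_⟩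
  rintro ⟨rfl, rfl⟩; rfl

lemma bidegree_le_bidegree {a b a' b' : ℕ} :
    bidegree a b ≤ bidegree a' b' ↔ a ≤ a' ∧ b ≤ b' := by
  simp [Finsupp.le_def, Fin.forall_fin_two]

lemma bidegree_sub_bidegree (a b a' b' : ℕ) :
    bidegree a' b' - bidegree a b = bidegree (a' - a) (b' - b) := by
  ext x; fin_cases x <;> simp

lemma X_pow_mul_X_pow_eq_monomial (a b : ℕ) :
    (X 0 ^ a * X 1 ^ b : MvPolynomial (Fin 2) R) = monomial (bidegree a b) 1 := by
  rw [X_pow_eq_monomial, X_pow_eq_monomial, monomial_mul, one_mul, bidegree]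

lemma smul_monomial_one {σ : Type*} (d : σ →₀ ℕ) (c : R) :
    c • monomial d (1 : R) = monomial d c := by
  rw [smul_monomial, smul_eq_mul, mul_one]

lemma coeff_bidegree_monomial_mul (a b a' b' : ℕ) (c : R) (p : MvPolynomial (Fin 2) R) :
    coeff (bidegree a' b') (monomial (bidegree a b) c * p) =
      if a ≤ a' ∧ b ≤ b' then c * coeff (bidegree (a' - a) (b' - b)) p else 0 := by
  simp only [coeff_monomial_mul', bidegree_le_bidegree, bidegree_sub_bidegree]

variable (R) in
noncomputable def bidegreeLT (m n : ℕ) : Submodule R (MvPolynomial (Fin 2) R) :=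
  restrictSupport R {d | d 0 < m ∧ d 1 < n}

lemma mem_bidegreeLT_of_degreeOf_lt {m n : ℕ} {p : MvPolynomial (Fin 2) R}
    (hm : p.degreeOf 0 < m) (hn : p.degreeOf 1 < n) : p ∈ bidegreeLT R m n :=
  fun _ hd => ⟨(monomial_le_degreeOf 0 hd).trans_lt hm, (monomial_le_degreeOf 1 hd).trans_lt hn⟩

lemma coeff_eq_zero_of_mem_bidegreeLT {m n a b : ℕ} {p : MvPolynomial (Fin 2) R}
    (hp : p ∈ bidegreeLT R m n) (hab : m ≤ a ∨ n ≤ b) : coeff (bidegree a b) p = 0 := by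
  by_contra hne
  have := hp (mem_support_iff.2 hne)
  simp only [Set.mem_ofPred_eq, bidegree_apply_zero, bidegree_apply_one] at this
  omega

lemma eq_sum_monomial_of_mem_bidegreeLT {m n : ℕ} {p : MvPolynomial (Fin 2) R}
    (hp : p ∈ bidegreeLT R m n) :
    p = ∑ β : Fin m × Fin n, monomial (bidegree β.1 β.2) (coeff (bidegree β.1 β.2) p) := by
  classical
  ext d
  rw [← bidegree_apply_eta d, coeff_sum]
  simp only [coeff_monomial, bidegree_inj]
  by_cases hd : d 0 < m ∧ d 1 < n
  · rw [Finset.sum_eq_single (⟨d 0, hd.1⟩, ⟨d 1, hd.2⟩)]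
    · simp
    · rintro ⟨⟨k, hk⟩, ⟨l, hl⟩⟩ _ hne
      rw [if_neg]; rintro ⟨rfl, rfl⟩; exact hne rfl
    · simp
  · rw [coeff_eq_zero_of_mem_bidegreeLT hp (by omega), Finset.sum_eq_zero]
    rintro ⟨⟨k, hk⟩, ⟨l, hl⟩⟩ _
    rw [if_neg]; rintro ⟨rfl, rfl⟩; omega

lemma eq_zero_of_mem_bidegreeLT {m n : ℕ} {p : MvPolynomial (Fin 2) R}
    (hp : p ∈ bidegreeLT R m n) (h : ∀ β : Fin m × Fin n, coeff (bidegree β.1 β.2) p = 0) :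
    p = 0 := by
  rw [eq_sum_monomial_of_mem_bidegreeLT hp]
  simp [h]

lemma eq_of_mul_le_mul_add {m i a a' : ℕ} (hi : i < m) (hle : a * m ≤ a' * m + i)
    (hlt : a' * m + i - a * m < m) : a = a' := by
  rcases Nat.lt_trichotomy a a' with h | h | h
  · have := Nat.mul_le_mul_right m (Nat.succ_le_of_lt h)
    rw [Nat.succ_mul] at this
    omega
  · exact h
  · have := Nat.mul_le_mul_right m (Nat.succ_le_of_lt h)
    rw [Nat.succ_mul] at this
    omega

lemma coeff_bidegree_block {m n i j : ℕ} (a b a' b' : ℕ) {q : MvPolynomial (Fin 2) R}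
    (hq : q ∈ bidegreeLT R m n) (hi : i < m) (hj : j < n) :
    coeff (bidegree (a' * m + i) (b' * n + j)) (monomial (bidegree (a * m) (b * n)) 1 * q) =
      if a = a' ∧ b = b' then coeff (bidegree i j) q else 0 := by
  rw [coeff_bidegree_monomial_mul, one_mul]
  split_ifs with hle heq heq
  · obtain ⟨rfl, rfl⟩ := heq
    simp
  · refine coeff_eq_zero_of_mem_bidegreeLT hq ?_
    by_contra! hlt
    exact heq ⟨eq_of_mul_le_mul_add hi hle.1 hlt.1, eq_of_mul_le_mul_add hj hle.2 hlt.2⟩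
  · obtain ⟨rfl, rfl⟩ := heq
    omega
  · rfl

noncomputable def blockSum (m n : ℕ) {p q : ℕ} (g : Fin p → Fin q → MvPolynomial (Fin 2) R) :
    MvPolynomial (Fin 2) R :=
  ∑ a : Fin p, ∑ b : Fin q, X 0 ^ ((a : ℕ) * m) * X 1 ^ ((b : ℕ) * n) * g a b

lemma coeff_blockSum {m n p q i j : ℕ} {g : Fin p → Fin q → MvPolynomial (Fin 2) R}
    (hg : ∀ a b, g a b ∈ bidegreeLT R m n) (a' : Fin p) (b' : Fin q) (hi : i < m) (hj : j < n) :
    coeff (bidegree (a' * m + i) (b' * n + j)) (blockSum m n g) =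
      coeff (bidegree i j) (g a' b') := by
  simp only [blockSum, coeff_sum, X_pow_mul_X_pow_eq_monomial,
    coeff_bidegree_block _ _ _ _ (hg _ _) hi hj, Fin.val_inj, ite_and]
  simp

lemma eq_zero_of_blockSum_eq_zero {m n p q : ℕ} {g : Fin p → Fin q → MvPolynomial (Fin 2) R}
    (hg : ∀ a b, g a b ∈ bidegreeLT R m n) (h : blockSum m n g = 0) (a : Fin p) (b : Fin q) :
    g a b = 0 :=
  eq_zero_of_mem_bidegreeLT (hg a b) fun β => by
    rw [← coeff_blockSum hg a b β.1.isLt β.2.isLt, h, coeff_zero]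

variable (R) in
/-- The coefficient of `x^i y^j` modulo `(x^{2m} - 1, y^{2n} - 1)`, for polynomials of degree
less than `4m` in `x` and `4n` in `y`. -/
noncomputable def fold (m n i j : ℕ) : MvPolynomial (Fin 2) R →ₗ[R] R :=
  lcoeff R (bidegree i j) + lcoeff R (bidegree i (2 * n + j)) +
    lcoeff R (bidegree (2 * m + i) j) + lcoeff R (bidegree (2 * m + i) (2 * n + j))

lemma fold_blockSum {m n i j : ℕ} {g : Fin 3 → Fin 3 → MvPolynomial (Fin 2) R}
    (hg : ∀ a b, g a b ∈ bidegreeLT R m n) (hi : i < m) (hj : j < n) :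
    fold R m n i j (blockSum m n g) = coeff (bidegree i j) (g 0 0 + g 0 2 + g 2 0 + g 2 2) := by
  have h00 := coeff_blockSum hg 0 0 hi hj
  have h02 := coeff_blockSum hg 0 2 hi hj
  have h20 := coeff_blockSum hg 2 0 hi hj
  have h22 := coeff_blockSum hg 2 2 hi hj
  simp only [Fin.val_zero, Fin.val_two, zero_mul, zero_add] at h00 h02 h20 h22
  simp only [fold, LinearMap.add_apply, lcoeff_apply, coeff_add, h00, h02, h20, h22]

end CommSemiring

section CommRing

variable {R : Type*} [CommRing R] (h : Fin 9 → MvPolynomial (Fin 2) R)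

noncomputable def syzygyBlocks : Fin 3 → Fin 3 → MvPolynomial (Fin 2) R :=
  !![h 8 - h 2 - h 6, h 3 - h 5, h 6 - h 8;
     h 1 - h 7, h 4, h 7;
     h 2 - h 8, h 5, h 8]

lemma syzygyBlocks_corners :
    syzygyBlocks h 0 0 + syzygyBlocks h 0 2 + syzygyBlocks h 2 0 + syzygyBlocks h 2 2 = 0 := by
  simp [syzygyBlocks]
  ring

lemma syzygyBlocks_mem {m n : ℕ} (hh : ∀ i, h i ∈ bidegreeLT R m n) (a b : Fin 3) :
    syzygyBlocks h a b ∈ bidegreeLT R m n := by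
  fin_cases a <;> fin_cases b <;> simp [syzygyBlocks] <;>
    apply_rules [Submodule.sub_mem, Submodule.add_mem]

lemma eq_zero_of_syzygyBlocks_eq_zero (hg : ∀ a b, syzygyBlocks h a b = 0) (h0 : h 0 = 0) :
    h = 0 := by
  obtain ⟨⟨-, g01, g02⟩, ⟨g10, g11, g12⟩, g20, g21, g22⟩ :
      (_ ∧ h 3 - h 5 = 0 ∧ h 6 - h 8 = 0) ∧ (h 1 - h 7 = 0 ∧ h 4 = 0 ∧ h 7 = 0) ∧
        h 2 - h 8 = 0 ∧ h 5 = 0 ∧ h 8 = 0 := by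
    simpa [syzygyBlocks, Fin.forall_fin_succ] using hg
  ext1 i
  fin_cases i <;> simp only [Fin.zero_eta, Fin.mk_one, Fin.reduceFinMk, Pi.zero_apply]
  · exact h0
  · linear_combination g10 + g12
  · linear_combination g20 + g22
  · linear_combination g01 + g21
  · exact g11
  · exact g21
  · linear_combination g02 + g22
  · exact g12
  · exact g22

end CommRing

variable {K : Type*} [Field K]

lemma sum_Tvec_mul_eq (m n : ℕ) (t : ℤ × ℤ → K) (h : Fin 9 → MvPolynomial (Fin 2) K) :
    ∑ i, Tvec m n t i * h i = Ttilde2 m n t * h 0 + blockSum m n (syzygyBlocks h) := by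
  simp [Fin.sum_univ_succ, Tvec, blockSum, syzygyBlocks]
  ring

/-- The coefficient of `x^p` in `T̃` carries the Toeplitz offset `signedRep m p ∈ [-m, m)`. -/
def signedRep (m p : ℕ) : ℤ := if p < m then p else p - 2 * m

lemma coeff_Ttilde2 (m n : ℕ) (t : ℤ × ℤ → K) (p q : ℕ) :
    coeff (bidegree p q) (Ttilde2 m n t) =
      if p < 2 * m ∧ q < 2 * n then t (signedRep m p, signedRep n q) else 0 := by
  simp only [Ttilde2, mul_assoc, X_pow_mul_X_pow_eq_monomial, C_mul_monomial, mul_one,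
    coeff_sum, coeff_monomial, bidegree_inj, ite_and]
  simp [Finset.sum_ite_eq', signedRep]

lemma fold_monomial_mul_Ttilde2 {m n i j k l : ℕ} (t : ℤ × ℤ → K) (hi : i < m) (hj : j < n)
    (hk : k < m) (hl : l < n) :
    fold K m n i j (monomial (bidegree k l) 1 * Ttilde2 m n t) = t (i - k, j - l) := by
  simp only [fold, LinearMap.add_apply, lcoeff_apply, coeff_bidegree_monomial_mul, one_mul,
    coeff_Ttilde2, signedRep]
  rcases le_or_gt k i with hki | hki <;> rcases le_or_gt l j with hlj | hlj <;>
    simp (disch := omega) only [if_pos, if_neg, add_zero, zero_add] <;> congr 2 <;> omega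

lemma fold_Ttilde2_mul {m n i j : ℕ} (t : ℤ × ℤ → K) {p : MvPolynomial (Fin 2) K}
    (hp : p ∈ bidegreeLT K m n) (hi : i < m) (hj : j < n) :
    fold K m n i j (Ttilde2 m n t * p) =
      ∑ β : Fin m × Fin n, t (i - β.1, j - β.2) * coeff (bidegree β.1 β.2) p := by
  conv_lhs => rw [eq_sum_monomial_of_mem_bidegreeLT hp]
  simp only [Finset.mul_sum, map_sum]
  refine Finset.sum_congr rfl fun β _ => ?_
  rw [← smul_monomial_one, mul_smul_comm, map_smul, mul_comm,
    fold_monomial_mul_Ttilde2 t hi hj β.1.isLt β.2.isLt, smul_eq_mul, mul_comm]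

lemma toeplitz_mulVec_eq_zero {m n : ℕ} (t : ℤ × ℤ → K) {p : MvPolynomial (Fin 2) K}
    {g : Fin 3 → Fin 3 → MvPolynomial (Fin 2) K} (hp : p ∈ bidegreeLT K m n)
    (hg : ∀ a b, g a b ∈ bidegreeLT K m n) (hcorners : g 0 0 + g 0 2 + g 2 0 + g 2 2 = 0)
    (hS : Ttilde2 m n t * p + blockSum m n g = 0) :
    (Matrix.of fun α β : Fin m × Fin n =>
        t ((α.1 : ℤ) - (β.1 : ℤ), (α.2 : ℤ) - (β.2 : ℤ))).mulVec
      (fun β => coeff (bidegree β.1 β.2) p) = 0 := by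
  ext α
  have h := congr(fold K m n α.1 α.2 $hS)
  rw [map_add, fold_Ttilde2_mul t hp α.1.isLt α.2.isLt, fold_blockSum hg α.1.isLt α.2.isLt,
    hcorners, coeff_zero, add_zero, map_zero] at h
  simpa [Matrix.mulVec, dotProduct] using h

end ToeplitzSyzygy

open ToeplitzSyzygy

theorem stmt_17_general {K : Type*} [Field K] (m n : ℕ)
    (t : ℤ × ℤ → K)
    (T : Matrix (Fin m × Fin n) (Fin m × Fin n) K)
    (hT : T = Matrix.of fun α β : Fin m × Fin n =>
      t ((α.1 : ℤ) - (β.1 : ℤ), (α.2 : ℤ) - (β.2 : ℤ)))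
    (hTinv : IsUnit T)
    (h : Fin 9 → MvPolynomial (Fin 2) K)
    (hdeg : ∀ i, (h i).degreeOf 0 < m ∧ (h i).degreeOf 1 < n)
    (hsyz : ∑ i, Tvec m n t i * h i = 0) :
    h = 0 := by
  have hh i : h i ∈ bidegreeLT K m n := mem_bidegreeLT_of_degreeOf_lt (hdeg i).1 (hdeg i).2
  have hg := syzygyBlocks_mem h hh
  rw [sum_Tvec_mul_eq] at hsyz
  have h0 : h 0 = 0 := by
    have hv : (fun β : Fin m × Fin n => coeff (bidegree β.1 β.2) (h 0)) = 0 := by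
      refine Matrix.mulVec_injective_iff_isUnit.2 hTinv ?_
      rw [Matrix.mulVec_zero, hT]
      exact toeplitz_mulVec_eq_zero t (hh 0) hg (syzygyBlocks_corners h) hsyz
    exact eq_zero_of_mem_bidegreeLT (hh 0) (congrFun hv)
  rw [h0, mul_zero, zero_add] at hsyz
  exact eq_zero_of_syzygyBlocks_eq_zero h (eq_zero_of_blockSum_eq_zero hg hsyz) h0

/-- If the Toeplitz-block-Toeplitz matrix `T` is invertible, the only syzygy
`(h₁,…,h₉)` of `𝐓` with every `hᵢ` of degree `≤ m-1` in `x` and `≤ n-1` in `y`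
is the zero syzygy. -/
theorem stmt_17 {K : Type*} [Field K] (m n : ℕ) (hm : 0 < m) (hn : 0 < n)
    (t : ℤ × ℤ → K)
    (T : Matrix (Fin m × Fin n) (Fin m × Fin n) K)
    (hT : T = Matrix.of fun α β : Fin m × Fin n =>
      t ((α.1 : ℤ) - (β.1 : ℤ), (α.2 : ℤ) - (β.2 : ℤ)))
    (hTinv : IsUnit T)
    (h : Fin 9 → MvPolynomial (Fin 2) K)
    (hdeg : ∀ i, (h i).degreeOf 0 < m ∧ (h i).degreeOf 1 < n)
    (hsyz : ∑ i, Tvec m n t i * h i = 0) :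
    h = 0 :=
  stmt_17_general m n t T hT hTinv h hdeg hsyz
end
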